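/- Assume that for every h ∈ G with h ≠ e, the unitary U_S(h) is not a complex scalar multiple of the identity 1_n. Let H_F be a Hermitian G×G matrix, H_S a Hermitian n×n matrix, set H := H_F ⊗ 1_n + 1_G ⊗ H_S (a non-interacting Hamiltonian), and fix frame orientations g_i, g_j ∈ G. Then there exist a G×G matrix A and an n×n matrix B with 𝐔 H 𝐔† = A ⊗ 1_n + 1_G ⊗ B (i.e. the system remains dynamically closed after the QRF transformation) if and only if H_F is diagonal in the group basis and H_S commutes with U_S(g) for all g ∈ G; and in that case 𝐔 H 𝐔† = (P H_F P†) ⊗ 1_n + 1_G ⊗ H_S, where P = P^{g_i,g_j} is the parity-swap unitary. -/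

import Mathlib

/-!
Let `σ a = gi * gj / a`, the involution of `G` whose permutation matrix is `P`. The `(a, b)` block
of `𝐔 (H_F ⊗ 1 + 1 ⊗ H_S) 𝐔†` is `H_F (σ a) (σ b) • U_S (a / b) + δ_ab • U_a H_S U_a†`, where
`U_a = U_S (a / gi)`. If it equals `A ⊗ 1 + 1 ⊗ B`, an off-diagonal block makes
`H_F (σ a) (σ b) • U_S (a / b)` a scalar matrix, which forces `H_F (σ a) (σ b) = 0`; the diagonal
blocks show that every `U_a H_S U_a†` differs from `B`, hence from `H_S = U_gi H_S U_gi†`, by a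
scalar, and comparing traces makes that scalar vanish. Conversely, under these two conditions the
blocks are exactly those of `(P H_F P†) ⊗ 1 + 1 ⊗ H_S`.
-/

open Matrix Kronecker

variable {G : Type*} [Fintype G] [CommGroup G] [DecidableEq G] {n : ℕ}

/-- The QRF-transformation unitary `𝐔^{g_i,g_j} = Σ_g |g g_i⟩⟨g_j g⁻¹| ⊗ U_S(g)`. -/
noncomputable def Uqrf (U : G →* Matrix.unitaryGroup (Fin n) ℂ) (gi gj : G) :
    Matrix (G × Fin n) (G × Fin n) ℂ :=
  ∑ g : G, Matrix.single (g * gi) (gj * g⁻¹) (1 : ℂ) ⊗ₖ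
    (U g : Matrix (Fin n) (Fin n) ℂ)

/-- The parity-swap unitary `P^{g_i,g_j} = Σ_g |g_i g⟩⟨g_j g⁻¹|` on `ℂ^G`. -/
noncomputable def Pswap (gi gj : G) : Matrix G G ℂ :=
  ∑ g : G, Matrix.single (gi * g) (gj * g⁻¹) (1 : ℂ)

def paritySwapPerm {Γ : Type*} [CommGroup Γ] (gi gj : Γ) : Equiv.Perm Γ :=
  Function.Involutive.toPerm (fun a => gi * gj / a) fun _ => div_div_cancel _ _

lemma paritySwapPerm_apply {Γ : Type*} [CommGroup Γ] (gi gj a : Γ) :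
    paritySwapPerm gi gj a = gi * gj / a :=
  rfl

lemma paritySwapPerm_apply_apply {Γ : Type*} [CommGroup Γ] (gi gj a : Γ) :
    paritySwapPerm gi gj (paritySwapPerm gi gj a) = a :=
  div_div_cancel _ _

lemma comp_symm_kronecker_one_add_one_kronecker {I K R : Type*} [DecidableEq I] [DecidableEq K]
    [Semiring R] (A : Matrix I I R) (B : Matrix K K R) (i j : I) :
    (comp I I K K R).symm (A ⊗ₖ (1 : Matrix K K R) + (1 : Matrix I I R) ⊗ₖ B) i j =
      A i j • (1 : Matrix K K R) + (1 : Matrix I I R) i j • B :=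
  rfl

lemma coe_mul_conjTranspose_coe {Γ ι 𝕜 : Type*} [Group Γ] [Fintype ι] [DecidableEq ι]
    [CommRing 𝕜] [StarRing 𝕜] (U : Γ →* unitaryGroup ι 𝕜) (g h : Γ) :
    (U g : Matrix ι ι 𝕜) * (U h : Matrix ι ι 𝕜)ᴴ = U (g / h) := by
  rw [← star_eq_conjTranspose, ← UnitaryGroup.inv_apply, ← UnitaryGroup.mul_apply, ← map_inv,
    ← map_mul, div_eq_mul_inv]

lemma eq_zero_of_smul_eq_smul_of_not_exists_eq_smul {𝕜 M : Type*} [Field 𝕜] [AddCommGroup M]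
    [Module 𝕜 M] {v w : M} (hv : ¬ ∃ c : 𝕜, v = c • w) {x y : 𝕜} (h : x • v = y • w) :
    x = 0 := by
  by_contra hx
  exact hv ⟨y / x, by rw [div_eq_inv_mul, mul_smul, ← h, inv_smul_smul₀ hx]⟩

lemma Matrix.commute_of_conj_eq_add_smul_one {ι 𝕜 : Type*} [Fintype ι] [DecidableEq ι]
    [Field 𝕜] [CharZero 𝕜] [StarRing 𝕜] {V M : Matrix ι ι 𝕜} (hV : Vᴴ * V = 1) {c : 𝕜}
    (h : V * M * Vᴴ = M + c • 1) : Commute M V := by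
  have hc : c • (1 : Matrix ι ι 𝕜) = 0 := by
    have htr := congrArg trace h
    rw [trace_mul_cycle, hV, Matrix.one_mul, trace_add, trace_smul, trace_one, smul_eq_mul,
      left_eq_add, mul_eq_zero, Nat.cast_eq_zero, Fintype.card_eq_zero_iff] at htr
    rcases htr with rfl | hι
    · exact zero_smul _ _
    · exact Subsingleton.elim _ _
  rw [hc, add_zero] at h
  calc M * V = V * M * Vᴴ * V := by rw [h]
    _ = V * M := by rw [Matrix.mul_assoc, hV, Matrix.mul_one]

lemma Pswap_eq_permMatrix (gi gj : G) :
    Pswap gi gj = (paritySwapPerm gi gj).permMatrix ℂ := by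
  ext a c
  have hσ : gj * (gi⁻¹ * a)⁻¹ = gi * gj / a := by
    rw [← div_eq_inv_mul, inv_div, mul_div_assoc', mul_comm]
  rw [Pswap, Matrix.sum_apply, Finset.sum_eq_single (gi⁻¹ * a)]
  · simp only [single_apply, mul_inv_cancel_left, hσ, true_and, PEquiv.toMatrix_apply,
      Equiv.toPEquiv_apply, Option.mem_def, Option.some_inj, paritySwapPerm_apply]
  · intro g _ hg
    simp [eq_inv_mul_iff_mul_eq.not.mp hg]
  · simp

lemma Pswap_mul_mul_conjTranspose (gi gj : G) (M : Matrix G G ℂ) :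
    Pswap gi gj * M * (Pswap gi gj)ᴴ =
      M.submatrix (paritySwapPerm gi gj) (paritySwapPerm gi gj) := by
  rw [Pswap_eq_permMatrix, conjTranspose_permMatrix, PEquiv.toMatrix_toPEquiv_mul,
    PEquiv.mul_toMatrix_toPEquiv, submatrix_submatrix]
  rfl

lemma Uqrf_apply (U : G →* unitaryGroup (Fin n) ℂ) (gi gj a c : G) (s u : Fin n) :
    Uqrf U gi gj (a, s) (c, u) =
      if paritySwapPerm gi gj a = c then (U (a / gi) : Matrix (Fin n) (Fin n) ℂ) s u
      else 0 := by
  have hσ : gj * (a / gi)⁻¹ = gi * gj / a := by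
    rw [inv_div, mul_div_assoc', mul_comm]
  rw [Uqrf, Matrix.sum_apply, Finset.sum_eq_single (a / gi)]
  · simp only [kroneckerMap_apply, single_apply, div_mul_cancel, hσ, true_and, ite_mul,
      one_mul, zero_mul, paritySwapPerm_apply]
    congr
  · intro g _ hg
    simp [eq_div_iff_mul_eq'.not.mp hg]
  · simp

lemma comp_symm_Uqrf_mul_mul_conjTranspose (U : G →* unitaryGroup (Fin n) ℂ) (gi gj : G)
    (M : Matrix (G × Fin n) (G × Fin n) ℂ) (a b : G) :
    (comp _ _ _ _ _).symm (Uqrf U gi gj * M * (Uqrf U gi gj)ᴴ) a b =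
      (U (a / gi) : Matrix (Fin n) (Fin n) ℂ) *
        (comp _ _ _ _ _).symm M (paritySwapPerm gi gj a) (paritySwapPerm gi gj b) *
          (U (b / gi) : Matrix (Fin n) (Fin n) ℂ)ᴴ := by
  ext s t
  simp only [comp_symm_apply, mul_apply, Fintype.sum_prod_type, Uqrf_apply, conjTranspose_apply,
    apply_ite (starRingEnd ℂ), ite_mul, mul_ite, zero_mul, mul_zero, map_zero, Finset.sum_ite_eq,
    Finset.sum_ite_irrel, Finset.sum_const_zero, Finset.mem_univ, if_true, RCLike.star_def]

lemma comp_symm_Uqrf_conj_free (U : G →* unitaryGroup (Fin n) ℂ) (gi gj : G)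
    (HF : Matrix G G ℂ) (HS : Matrix (Fin n) (Fin n) ℂ) (a b : G) :
    (comp _ _ _ _ _).symm (Uqrf U gi gj * (HF ⊗ₖ 1 + 1 ⊗ₖ HS) * (Uqrf U gi gj)ᴴ) a b =
      HF (paritySwapPerm gi gj a) (paritySwapPerm gi gj b) •
          (U (a / b) : Matrix (Fin n) (Fin n) ℂ) +
        (1 : Matrix G G ℂ) a b • ((U (a / gi) : Matrix (Fin n) (Fin n) ℂ) * HS *
          (U (b / gi) : Matrix (Fin n) (Fin n) ℂ)ᴴ) := by
  have hδ : (1 : Matrix G G ℂ) (paritySwapPerm gi gj a) (paritySwapPerm gi gj b) =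
      (1 : Matrix G G ℂ) a b :=
    congrFun₂ (submatrix_one_equiv (paritySwapPerm gi gj)) a b
  rw [comp_symm_Uqrf_mul_mul_conjTranspose, comp_symm_kronecker_one_add_one_kronecker, hδ,
    Matrix.mul_add, Matrix.add_mul, Matrix.mul_smul, Matrix.mul_one, Matrix.smul_mul,
    coe_mul_conjTranspose_coe, div_div_div_cancel_right, Matrix.mul_smul, Matrix.smul_mul]

section FreeHamiltonian

variable {U : G →* unitaryGroup (Fin n) ℂ} {gi gj : G} {HF A : Matrix G G ℂ}
  {HS B : Matrix (Fin n) (Fin n) ℂ}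

lemma blocks_eq_of_Uqrf_conj_eq
    (hX : Uqrf U gi gj * (HF ⊗ₖ 1 + 1 ⊗ₖ HS) * (Uqrf U gi gj)ᴴ = A ⊗ₖ 1 + 1 ⊗ₖ B) (a b : G) :
    HF (paritySwapPerm gi gj a) (paritySwapPerm gi gj b) •
          (U (a / b) : Matrix (Fin n) (Fin n) ℂ) +
        (1 : Matrix G G ℂ) a b • ((U (a / gi) : Matrix (Fin n) (Fin n) ℂ) * HS *
          (U (b / gi) : Matrix (Fin n) (Fin n) ℂ)ᴴ) =
      A a b • 1 + (1 : Matrix G G ℂ) a b • B := by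
  rw [← comp_symm_Uqrf_conj_free, hX, comp_symm_kronecker_one_add_one_kronecker]

lemma apply_eq_zero_of_ne_of_Uqrf_conj_eq
    (hU : ∀ h : G, h ≠ 1 → ¬ ∃ c : ℂ, (U h : Matrix (Fin n) (Fin n) ℂ) = c • 1)
    (hX : Uqrf U gi gj * (HF ⊗ₖ 1 + 1 ⊗ₖ HS) * (Uqrf U gi gj)ᴴ = A ⊗ₖ 1 + 1 ⊗ₖ B)
    {g g' : G} (hne : g ≠ g') : HF g g' = 0 := by
  have hσ := (paritySwapPerm gi gj).injective.ne hne
  have h := blocks_eq_of_Uqrf_conj_eq hX (paritySwapPerm gi gj g) (paritySwapPerm gi gj g')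
  rw [one_apply_ne hσ, zero_smul, zero_smul, add_zero, add_zero, paritySwapPerm_apply_apply,
    paritySwapPerm_apply_apply] at h
  exact eq_zero_of_smul_eq_smul_of_not_exists_eq_smul (hU _ (div_ne_one.mpr hσ)) h

lemma commute_of_Uqrf_conj_eq
    (hX : Uqrf U gi gj * (HF ⊗ₖ 1 + 1 ⊗ₖ HS) * (Uqrf U gi gj)ᴴ = A ⊗ₖ 1 + 1 ⊗ₖ B) (g : G) :
    Commute HS (U g : Matrix (Fin n) (Fin n) ℂ) := by
  have hblock : ∀ a : G, ∃ c : ℂ,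
      (U (a / gi) : Matrix (Fin n) (Fin n) ℂ) * HS * (U (a / gi) : Matrix (Fin n) (Fin n) ℂ)ᴴ =
        B + c • 1 := by
    intro a
    have h := blocks_eq_of_Uqrf_conj_eq hX a a
    rw [one_apply_eq, one_smul, one_smul, div_self', map_one, UnitaryGroup.one_apply] at h
    exact ⟨A a a - HF (paritySwapPerm gi gj a) (paritySwapPerm gi gj a), by
      rw [sub_smul, add_sub, add_comm B, ← h, add_sub_cancel_left]⟩
  obtain ⟨c₀, h₀⟩ := hblock gi
  obtain ⟨c, h⟩ := hblock (g * gi)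
  rw [div_self', map_one, UnitaryGroup.one_apply, Matrix.one_mul, conjTranspose_one,
    Matrix.mul_one] at h₀
  rw [mul_div_cancel_right] at h
  refine commute_of_conj_eq_add_smul_one (c := c - c₀) ?_ ?_
  · rw [← star_eq_conjTranspose]
    exact UnitaryGroup.star_mul_self (U g)
  · rw [h, h₀, sub_smul]
    abel

lemma Uqrf_conj_eq_of_offDiag_eq_zero_of_commute
    (hdiag : ∀ g g' : G, g ≠ g' → HF g g' = 0)
    (hcomm : ∀ g : G,
      HS * (U g : Matrix (Fin n) (Fin n) ℂ) = (U g : Matrix (Fin n) (Fin n) ℂ) * HS) :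
    Uqrf U gi gj * (HF ⊗ₖ 1 + 1 ⊗ₖ HS) * (Uqrf U gi gj)ᴴ =
      (Pswap gi gj * HF * (Pswap gi gj)ᴴ) ⊗ₖ 1 + 1 ⊗ₖ HS := by
  apply (comp G G (Fin n) (Fin n) ℂ).symm.injective
  funext a b
  rw [comp_symm_Uqrf_conj_free, comp_symm_kronecker_one_add_one_kronecker,
    Pswap_mul_mul_conjTranspose, submatrix_apply]
  rcases eq_or_ne a b with rfl | hab
  · rw [div_self', map_one, UnitaryGroup.one_apply, one_apply_eq, one_smul, one_smul, ← hcomm,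
      Matrix.mul_assoc, ← star_eq_conjTranspose, Unitary.mul_star_self_of_mem (U (a / gi)).prop,
      Matrix.mul_one]
  · rw [hdiag _ _ ((paritySwapPerm gi gj).injective.ne hab), one_apply_ne hab]
    simp only [zero_smul, add_zero]

end FreeHamiltonian

theorem free_Hamiltonian_stays_free_iff_general
    (U : G →* Matrix.unitaryGroup (Fin n) ℂ)
    (hU : ∀ h : G, h ≠ 1 →
      ¬ ∃ c : ℂ, (U h : Matrix (Fin n) (Fin n) ℂ) = c • (1 : Matrix (Fin n) (Fin n) ℂ))
    (gi gj : G)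
    (HF : Matrix G G ℂ)
    (HS : Matrix (Fin n) (Fin n) ℂ) :
    ((∃ A : Matrix G G ℂ, ∃ B : Matrix (Fin n) (Fin n) ℂ,
        Uqrf U gi gj *
            (HF ⊗ₖ (1 : Matrix (Fin n) (Fin n) ℂ) + (1 : Matrix G G ℂ) ⊗ₖ HS) *
            (Uqrf U gi gj)ᴴ =
          A ⊗ₖ (1 : Matrix (Fin n) (Fin n) ℂ) + (1 : Matrix G G ℂ) ⊗ₖ B) ↔
      ((∀ g g' : G, g ≠ g' → HF g g' = 0) ∧
        (∀ g : G, HS * (U g : Matrix (Fin n) (Fin n) ℂ) =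
          (U g : Matrix (Fin n) (Fin n) ℂ) * HS))) ∧
    (((∀ g g' : G, g ≠ g' → HF g g' = 0) ∧
        (∀ g : G, HS * (U g : Matrix (Fin n) (Fin n) ℂ) =
          (U g : Matrix (Fin n) (Fin n) ℂ) * HS)) →
      Uqrf U gi gj *
          (HF ⊗ₖ (1 : Matrix (Fin n) (Fin n) ℂ) + (1 : Matrix G G ℂ) ⊗ₖ HS) *
          (Uqrf U gi gj)ᴴ =
        (Pswap gi gj * HF * (Pswap gi gj)ᴴ) ⊗ₖ (1 : Matrix (Fin n) (Fin n) ℂ) +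
          (1 : Matrix G G ℂ) ⊗ₖ HS) := by
  refine ⟨⟨fun ⟨A, B, hX⟩ => ⟨fun _ _ => apply_eq_zero_of_ne_of_Uqrf_conj_eq hU hX,
      fun g => (commute_of_Uqrf_conj_eq hX g).eq⟩,
    fun ⟨hdiag, hcomm⟩ => ⟨_, _, Uqrf_conj_eq_of_offDiag_eq_zero_of_commute hdiag hcomm⟩⟩,
    fun ⟨hdiag, hcomm⟩ => Uqrf_conj_eq_of_offDiag_eq_zero_of_commute hdiag hcomm⟩

/-- closed-to-closed and closed-to-open subsystem dynamics. Assuming no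
nontrivial translation is a scalar, a non-interacting Hamiltonian
`H = H_F ⊗ 1 + 1 ⊗ H_S` stays non-interacting under the QRF transformation iff `H_F` is
diagonal in the group basis and `H_S` is translation-invariant; in that case
`𝐔 H 𝐔† = (P H_F P†) ⊗ 1 + 1 ⊗ H_S`. -/
theorem free_Hamiltonian_stays_free_iff (hn : 1 ≤ n)
    (U : G →* Matrix.unitaryGroup (Fin n) ℂ)
    (hU : ∀ h : G, h ≠ 1 →
      ¬ ∃ c : ℂ, (U h : Matrix (Fin n) (Fin n) ℂ) = c • (1 : Matrix (Fin n) (Fin n) ℂ))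
    (gi gj : G)
    (HF : Matrix G G ℂ) (hHF : HF.IsHermitian)
    (HS : Matrix (Fin n) (Fin n) ℂ) (hHS : HS.IsHermitian) :
    ((∃ A : Matrix G G ℂ, ∃ B : Matrix (Fin n) (Fin n) ℂ,
        Uqrf U gi gj *
            (HF ⊗ₖ (1 : Matrix (Fin n) (Fin n) ℂ) + (1 : Matrix G G ℂ) ⊗ₖ HS) *
            (Uqrf U gi gj)ᴴ =
          A ⊗ₖ (1 : Matrix (Fin n) (Fin n) ℂ) + (1 : Matrix G G ℂ) ⊗ₖ B) ↔
      ((∀ g g' : G, g ≠ g' → HF g g' = 0) ∧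
        (∀ g : G, HS * (U g : Matrix (Fin n) (Fin n) ℂ) =
          (U g : Matrix (Fin n) (Fin n) ℂ) * HS))) ∧
    (((∀ g g' : G, g ≠ g' → HF g g' = 0) ∧
        (∀ g : G, HS * (U g : Matrix (Fin n) (Fin n) ℂ) =
          (U g : Matrix (Fin n) (Fin n) ℂ) * HS)) →
      Uqrf U gi gj *
          (HF ⊗ₖ (1 : Matrix (Fin n) (Fin n) ℂ) + (1 : Matrix G G ℂ) ⊗ₖ HS) *
          (Uqrf U gi gj)ᴴ =
        (Pswap gi gj * HF * (Pswap gi gj)ᴴ) ⊗ₖ (1 : Matrix (Fin n) (Fin n) ℂ) +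
          (1 : Matrix G G ℂ) ⊗ₖ HS) :=
  free_Hamiltonian_stays_free_iff_general U hU gi gj HF HS
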